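/- Let 0 < α < 1/2 and let f be a bi-starlike function of order α, i.e. f ∈ S*_Σ(α). Then the pre-Schwarzian norm of f satisfies ||f|| ≤ min{6 − 4α, 4(1−α)/α}. -/

import Mathlib

open Metric Set

section PreSchwarzHelpers

lemma normsq_formula (x : ℂ) : ‖x‖^2 = x.re^2 + x.im^2 := by
  rw [Complex.sq_norm, Complex.normSq_apply]; ring

lemma conj_mul_self' (x : ℂ) : (starRingEnd ℂ) x * x = ((‖x‖^2 : ℝ) : ℂ) := by
  rw [mul_comm, Complex.mul_conj]
  norm_cast
  rw [Complex.normSq_eq_norm_sq]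

lemma mobius_key (a w : ℂ) :
    ‖1 + (starRingEnd ℂ) a * w‖^2 - ‖w + a‖^2 = (1 - ‖a‖^2) * (1 - ‖w‖^2) := by
  simp only [normsq_formula, Complex.add_re, Complex.add_im, Complex.mul_re, Complex.mul_im,
    Complex.conj_re, Complex.conj_im, Complex.one_re, Complex.one_im]
  ring

lemma mobius_den_ne (a w : ℂ) (ha : ‖a‖ < 1) (hw : ‖w‖ < 1) :
    (1 : ℂ) + (starRingEnd ℂ) a * w ≠ 0 := by
  intro h
  have h1 : ‖(1:ℂ) + (starRingEnd ℂ) a * w‖ = 0 := by rw [h]; simp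
  have h2 : ‖(starRingEnd ℂ) a * w‖ < 1 := by
    rw [norm_mul, RCLike.norm_conj]
    calc ‖a‖ * ‖w‖ ≤ ‖a‖ := mul_le_of_le_one_right (norm_nonneg a) hw.le
      _ < 1 := ha
  have := norm_sub_norm_le (1:ℂ) (-((starRingEnd ℂ) a * w))
  simp only [sub_neg_eq_add, norm_one, norm_neg] at this
  rw [h1] at this
  linarith

lemma mobius_maps (a : ℂ) (ha : ‖a‖ < 1) {w : ℂ} (hw : ‖w‖ < 1) :
    ‖(w + a) / (1 + (starRingEnd ℂ) a * w)‖ < 1 := by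
  have hden := mobius_den_ne a w ha hw
  have hdenpos : 0 < ‖(1:ℂ) + (starRingEnd ℂ) a * w‖ := norm_pos_iff.mpr hden
  rw [norm_div, div_lt_one hdenpos]
  have hk := mobius_key a w
  have hprod : 0 < (1 - ‖a‖^2) * (1 - ‖w‖^2) := by
    apply mul_pos <;> nlinarith [norm_nonneg a, norm_nonneg w]
  have hsq : ‖w + a‖^2 < ‖(1:ℂ) + (starRingEnd ℂ) a * w‖^2 := by linarith
  exact lt_of_pow_lt_pow_left₀ 2 (norm_nonneg _) hsq

lemma mobius_hasDerivAt (a w₀ : ℂ) (h : (1:ℂ) + (starRingEnd ℂ) a * w₀ ≠ 0) :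
    HasDerivAt (fun w => (w + a) / (1 + (starRingEnd ℂ) a * w))
      ((1 * (1 + (starRingEnd ℂ) a * w₀) - (w₀ + a) * (starRingEnd ℂ) a) /
        (1 + (starRingEnd ℂ) a * w₀)^2) w₀ := by
  have hc : HasDerivAt (fun w : ℂ => w + a) 1 w₀ := (hasDerivAt_id w₀).add_const a
  have hd : HasDerivAt (fun w : ℂ => 1 + (starRingEnd ℂ) a * w) ((starRingEnd ℂ) a) w₀ := by
    simpa using ((hasDerivAt_id w₀).const_mul ((starRingEnd ℂ) a)).const_add 1
  exact hc.div hd h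

/-- Schwarz–Pick lemma on the unit disc. -/
lemma schwarz_pick {ω : ℂ → ℂ} (hd : DifferentiableOn ℂ ω (ball (0:ℂ) 1))
    (hm : MapsTo ω (ball (0:ℂ) 1) (ball (0:ℂ) 1)) {z : ℂ} (hz : ‖z‖ < 1) :
    (1 - ‖z‖^2) * ‖deriv ω z‖ ≤ 1 - ‖ω z‖^2 := by
  set b := ω z with hbdef
  have hzball : z ∈ ball (0:ℂ) 1 := mem_ball_zero_iff.2 hz
  have hb : ‖b‖ < 1 := mem_ball_zero_iff.1 (hm hzball)
  have hnb : ‖-b‖ < 1 := by rwa [norm_neg]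
  set T : ℂ → ℂ := fun w => (w + z) / (1 + (starRingEnd ℂ) z * w) with hTdef
  set ψ : ℂ → ℂ := fun w => (w + (-b)) / (1 + (starRingEnd ℂ) (-b) * w) with hψdef
  have hTmaps : MapsTo T (ball (0:ℂ) 1) (ball (0:ℂ) 1) := fun w hw =>
    mem_ball_zero_iff.2 (mobius_maps z hz (mem_ball_zero_iff.1 hw))
  have hψmaps : MapsTo ψ (ball (0:ℂ) 1) (ball (0:ℂ) 1) := fun w hw =>
    mem_ball_zero_iff.2 (mobius_maps (-b) hnb (mem_ball_zero_iff.1 hw))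
  have hTdiff : DifferentiableOn ℂ T (ball (0:ℂ) 1) := fun w hw =>
    ((mobius_hasDerivAt z w (mobius_den_ne z w hz
      (mem_ball_zero_iff.1 hw))).differentiableAt).differentiableWithinAt
  have hψdiff : DifferentiableOn ℂ ψ (ball (0:ℂ) 1) := fun w hw =>
    ((mobius_hasDerivAt (-b) w (mobius_den_ne (-b) w hnb
      (mem_ball_zero_iff.1 hw))).differentiableAt).differentiableWithinAt
  have hT0 : T 0 = z := by simp [hTdef]
  have hψb : ψ b = 0 := by simp [hψdef]
  set F : ℂ → ℂ := ψ ∘ ω ∘ T with hFdef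
  have hF0 : F 0 = 0 := by simp [hFdef, Function.comp, hT0, ← hbdef, hψb]
  have hFmaps : MapsTo F (ball (0:ℂ) 1) (ball (0:ℂ) 1) := hψmaps.comp (hm.comp hTmaps)
  have hFdiff : DifferentiableOn ℂ F (ball (0:ℂ) 1) :=
    hψdiff.comp (hd.comp hTdiff hTmaps) (hm.comp hTmaps)
  have hSch : ‖deriv F 0‖ ≤ 1 :=
    Complex.norm_deriv_le_one_of_mapsTo_ball hFdiff
      (by rw [hF0]; exact hFmaps.mono_right ball_subset_closedBall) one_pos
  -- compute deriv F 0
  have hden0 : (1:ℂ) + (starRingEnd ℂ) z * 0 ≠ 0 := by simp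
  have hTder : HasDerivAt T (1 - (starRingEnd ℂ) z * z) 0 := by
    have := mobius_hasDerivAt z 0 hden0
    have he : (1 * (1 + (starRingEnd ℂ) z * 0) - (0 + z) * (starRingEnd ℂ) z) /
        (1 + (starRingEnd ℂ) z * 0)^2 = 1 - (starRingEnd ℂ) z * z := by
      simp; ring
    rwa [he] at this
  have hdenb : (1:ℂ) + (starRingEnd ℂ) (-b) * b ≠ 0 :=
    mobius_den_ne (-b) b hnb hb
  have hψder : HasDerivAt ψ ((1 - (starRingEnd ℂ) b * b)⁻¹) b := by
    have hder := mobius_hasDerivAt (-b) b hdenb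
    have h1 : (1:ℂ) + (starRingEnd ℂ) (-b) * b = 1 - (starRingEnd ℂ) b * b := by
      rw [map_neg]; ring
    have hXne : (1:ℂ) - (starRingEnd ℂ) b * b ≠ 0 := h1 ▸ hdenb
    have he : (1 * (1 + (starRingEnd ℂ) (-b) * b) - (b + (-b)) * (starRingEnd ℂ) (-b)) /
        (1 + (starRingEnd ℂ) (-b) * b)^2 = (1 - (starRingEnd ℂ) b * b)⁻¹ := by
      rw [h1, show (1 * ((1:ℂ) - (starRingEnd ℂ) b * b) - (b + (-b)) * (starRingEnd ℂ) (-b))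
        = 1 - (starRingEnd ℂ) b * b by ring, sq, div_mul_cancel_left₀ hXne]
    rwa [he] at hder
  have hωder : HasDerivAt ω (deriv ω z) z :=
    (hd.differentiableAt (isOpen_ball.mem_nhds hzball)).hasDerivAt
  have h1 : HasDerivAt (ω ∘ T) (deriv ω z * (1 - (starRingEnd ℂ) z * z)) 0 := by
    have hω' : HasDerivAt ω (deriv ω z) (T 0) := hT0.symm ▸ hωder
    exact hω'.comp 0 hTder
  have hωT0 : (ω ∘ T) 0 = b := by simp [Function.comp, hT0, hbdef]
  have hFder : HasDerivAt F ((1 - (starRingEnd ℂ) b * b)⁻¹ *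
      (deriv ω z * (1 - (starRingEnd ℂ) z * z))) 0 := by
    have hψ' : HasDerivAt ψ ((1 - (starRingEnd ℂ) b * b)⁻¹) ((ω ∘ T) 0) := hωT0.symm ▸ hψder
    exact hψ'.comp 0 h1
  rw [hFder.deriv] at hSch
  have e1 : (1:ℂ) - (starRingEnd ℂ) b * b = ((1 - ‖b‖^2 : ℝ) : ℂ) := by
    rw [conj_mul_self']; push_cast; ring
  have e2 : (1:ℂ) - (starRingEnd ℂ) z * z = ((1 - ‖z‖^2 : ℝ) : ℂ) := by
    rw [conj_mul_self']; push_cast; ring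
  have hbpos : 0 < 1 - ‖b‖^2 := by nlinarith [norm_nonneg b]
  have hzpos : 0 < 1 - ‖z‖^2 := by nlinarith [norm_nonneg z]
  rw [e1, e2, norm_mul, norm_mul, norm_inv, Complex.norm_real, Complex.norm_real,
    Real.norm_eq_abs, Real.norm_eq_abs, abs_of_pos hbpos, abs_of_pos hzpos] at hSch
  rw [inv_mul_le_iff₀ hbpos] at hSch
  nlinarith [hSch]


lemma halfplane_key (α : ℝ) (P : ℂ) :
    ‖P + 1 - 2*(α:ℂ)‖^2 - ‖P - 1‖^2 = 4*(1-α)*(P.re - α) := by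
  simp only [normsq_formula, Complex.add_re, Complex.add_im, Complex.sub_re, Complex.sub_im,
    Complex.mul_re, Complex.mul_im, Complex.ofReal_re, Complex.ofReal_im,
    Complex.one_re, Complex.one_im, Complex.re_ofNat, Complex.im_ofNat]
  ring


lemma starlike_core (α : ℝ) (hα0 : 0 < α) (hα1 : α < 1) {p : ℂ → ℂ}
    (hpd : DifferentiableOn ℂ p (ball (0:ℂ) 1)) (hp0 : p 0 = 1)
    (hpre : ∀ w ∈ ball (0:ℂ) 1, α < (p w).re) {z : ℂ} (hz : ‖z‖ < 1) :
    ‖p z - 1‖ ≤ 2*(1-α)*‖z‖/(1-‖z‖) ∧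
      (1 - ‖z‖^2) * ‖deriv p z‖ ≤ 2*((p z).re - α) := by
  have hzball : z ∈ ball (0:ℂ) 1 := mem_ball_zero_iff.2 hz
  set ω : ℂ → ℂ := fun w => (p w - 1) / (p w + 1 - 2*(α:ℂ)) with hωdef
  have hDre : ∀ w ∈ ball (0:ℂ) 1, 0 < (p w + 1 - 2*(α:ℂ)).re := by
    intro w hw
    have := hpre w hw
    simp only [Complex.sub_re, Complex.add_re, Complex.one_re, Complex.mul_re,
      Complex.ofReal_re, Complex.ofReal_im, Complex.re_ofNat, Complex.im_ofNat]
    nlinarith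
  have hDne : ∀ w ∈ ball (0:ℂ) 1, p w + 1 - 2*(α:ℂ) ≠ 0 := by
    intro w hw h
    have := hDre w hw
    rw [h] at this
    simp at this
  have hDnormpos : ∀ w ∈ ball (0:ℂ) 1, 0 < ‖p w + 1 - 2*(α:ℂ)‖ :=
    fun w hw => norm_pos_iff.mpr (hDne w hw)
  have hωlt : ∀ w ∈ ball (0:ℂ) 1, ‖ω w‖ < 1 := by
    intro w hw
    have hk := halfplane_key α (p w)
    have hre := hpre w hw
    have hD := hDnormpos w hw
    rw [hωdef]
    simp only
    rw [norm_div, div_lt_one hD]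
    have hsq : ‖p w - 1‖^2 < ‖p w + 1 - 2*(α:ℂ)‖^2 := by nlinarith
    exact lt_of_pow_lt_pow_left₀ 2 (norm_nonneg _) hsq
  have hωmaps : MapsTo ω (ball (0:ℂ) 1) (ball (0:ℂ) 1) := fun w hw =>
    mem_ball_zero_iff.2 (hωlt w hw)
  have hω0 : ω 0 = 0 := by simp [hωdef, hp0]
  have hωdiff : DifferentiableOn ℂ ω (ball (0:ℂ) 1) :=
    ((hpd.sub_const 1).div ((hpd.add_const 1).sub_const _) hDne)
  have hval : ‖ω z‖ ≤ ‖z‖ := by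
    have := Complex.norm_le_norm_of_mapsTo_ball hωdiff
      (hωmaps.mono_right ball_subset_closedBall) hω0 (z := z) hz
    exact this
  have hSP := schwarz_pick hωdiff hωmaps hz
  set P := p z with hPdef
  set u := ω z with hudef
  set Dz := P + 1 - 2*(α:ℂ) with hDzdef
  have hDzne : Dz ≠ 0 := hDne z hzball
  have hDzpos : 0 < ‖Dz‖ := hDnormpos z hzball
  have huD : u * Dz = P - 1 := by
    rw [hudef, hωdef]
    exact div_mul_cancel₀ _ hDzne
  have hDu : Dz * (1 - u) = 2 - 2*(α:ℂ) := by
    rw [mul_sub, mul_one, mul_comm Dz u, huD, hDzdef]; ring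
  have hnorm2 : ‖(2:ℂ) - 2*(α:ℂ)‖ = 2 - 2*α := by
    rw [show (2:ℂ) - 2*(α:ℂ) = ((2 - 2*α : ℝ) : ℂ) by push_cast; ring,
      Complex.norm_real, Real.norm_eq_abs, abs_of_pos (by linarith)]
  have hnormDu : ‖Dz‖ * ‖1 - u‖ = 2 - 2*α := by rw [← norm_mul, hDu, hnorm2]
  have h1u : 1 - ‖z‖ ≤ ‖1 - u‖ := by
    have h1 := norm_sub_norm_le (1:ℂ) u
    rw [norm_one] at h1
    linarith
  have hPu : ‖P - 1‖ = ‖u‖ * ‖Dz‖ := by rw [← huD, norm_mul]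
  have hzpos : 0 < 1 - ‖z‖ := by linarith
  constructor
  · -- ‖P-1‖ ≤ 2(1-α)‖z‖/(1-‖z‖)
    rw [le_div_iff₀ hzpos]
    have c1 : ‖P - 1‖ * (1 - ‖z‖) ≤ ‖P - 1‖ * ‖1 - u‖ :=
      mul_le_mul_of_nonneg_left h1u (norm_nonneg _)
    have c2 : ‖P - 1‖ * ‖1 - u‖ = ‖u‖ * (2 - 2*α) := by
      rw [hPu]; nlinarith [hnormDu]
    have c3 : ‖u‖ * (2 - 2*α) ≤ ‖z‖ * (2 - 2*α) := by
      apply mul_le_mul_of_nonneg_right hval (by linarith)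
    nlinarith
  · -- derivative bound
    have hpat : DifferentiableAt ℂ p z := hpd.differentiableAt (isOpen_ball.mem_nhds hzball)
    have hc : HasDerivAt (fun w => p w - 1) (deriv p z) z := hpat.hasDerivAt.sub_const 1
    have hd2 : HasDerivAt (fun w => p w + 1 - 2*(α:ℂ)) (deriv p z) z :=
      (hpat.hasDerivAt.add_const 1).sub_const _
    have hωder : HasDerivAt ω ((deriv p z * Dz - (P - 1) * deriv p z) / Dz^2) z :=
      hc.div hd2 hDzne
    have hderiv_eq : deriv ω z = deriv p z * (2 - 2*(α:ℂ)) / Dz^2 := by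
      rw [hωder.deriv, hDzdef]; ring
    have hnormder : ‖deriv ω z‖ = ‖deriv p z‖ * (2 - 2*α) / ‖Dz‖^2 := by
      rw [hderiv_eq, norm_div, norm_mul, norm_pow, hnorm2]
    rw [hnormder] at hSP
    have hkey := halfplane_key α P
    have hU2 : ‖u‖^2 * ‖Dz‖^2 = ‖P - 1‖^2 := by rw [hPu]; ring
    have e3 : (1 - ‖u‖^2) * ‖Dz‖^2 = 2*(P.re - α)*(2 - 2*α) := by
      linear_combination hkey - hU2
    have h4 := mul_le_mul_of_nonneg_right hSP (sq_nonneg ‖Dz‖)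
    have h5 : (1 - ‖z‖^2) * (‖deriv p z‖ * (2 - 2*α) / ‖Dz‖^2) * ‖Dz‖^2
        = (1 - ‖z‖^2) * ‖deriv p z‖ * (2 - 2*α) := by
      rw [mul_assoc, div_mul_cancel₀ _ (pow_ne_zero 2 hDzpos.ne')]
      ring
    rw [h5, e3] at h4
    have h2α : 0 < 2 - 2*α := by linarith
    exact le_of_mul_le_mul_right (by linarith) h2α



end PreSchwarzHelpers

/-- If `0 < α < 1/2` and `f` is bi-starlike of order `α`, then its pre-Schwarzian
norm is at most `min (6 - 4α) (4(1-α)/α)`. -/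
theorem preSchwarzian_norm_bound_bi_starlike_small_order
    (α : ℝ) (hα0 : 0 < α) (hα1 : α < 1/2)
    (f g : ℂ → ℂ)
    (hf : AnalyticOnNhd ℂ f (Metric.ball (0:ℂ) 1))
    (hf0 : f 0 = 0) (hf'0 : deriv f 0 = 1)
    (hinj : Set.InjOn f (Metric.ball (0:ℂ) 1))
    (hg : AnalyticOnNhd ℂ g (Metric.ball (0:ℂ) 1))
    (hg0 : g 0 = 0)
    (hfg : ∀ w : ℂ, ‖w‖ < 1/4 → f (g w) = w)
    (hstar : ∀ z : ℂ, ‖z‖ < 1 → z ≠ 0 → α < (z * deriv f z / f z).re)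
    (hstar' : ∀ w : ℂ, ‖w‖ < 1 → w ≠ 0 → α < (w * deriv g w / g w).re) :
    ∀ z : ℂ, ‖z‖ < 1 →
      (1 - ‖z‖ ^ 2) * ‖deriv (deriv f) z / deriv f z‖ ≤
        min (6 - 4 * α) (4 * (1 - α) / α) := by
  have hα1' : α < 1 := by linarith
  have hmin : min (6 - 4 * α) (4 * (1 - α) / α) = 6 - 4 * α := by
    apply min_eq_left
    rw [le_div_iff₀ hα0]
    nlinarith
  rw [hmin]
  -- basic nonvanishing
  have hfne : ∀ w : ℂ, ‖w‖ < 1 → w ≠ 0 → f w ≠ 0 := by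
    intro w hw hw0 h
    have := hstar w hw hw0
    rw [h, div_zero] at this
    simp at this; linarith
  have hf'ne : ∀ w : ℂ, ‖w‖ < 1 → deriv f w ≠ 0 := by
    intro w hw
    rcases eq_or_ne w 0 with rfl | hw0
    · rw [hf'0]; exact one_ne_zero
    · intro h
      have := hstar w hw hw0
      rw [h, mul_zero, zero_div] at this
      simp at this; linarith
  -- the function p = z f'/f, defined via dslope
  set S : ℂ → ℂ := dslope f 0 with hSdef
  set p : ℂ → ℂ := fun w => deriv f w / S w with hpdef
  have hS0 : S 0 = 1 := by rw [hSdef, dslope_same, hf'0]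
  have hSval : ∀ w : ℂ, w ≠ 0 → S w = f w / w := by
    intro w hw0
    rw [hSdef, dslope_of_ne _ hw0, slope_def_field, hf0, sub_zero, sub_zero]
  have hSne : ∀ w : ℂ, ‖w‖ < 1 → S w ≠ 0 := by
    intro w hw
    rcases eq_or_ne w 0 with rfl | hw0
    · rw [hS0]; exact one_ne_zero
    · rw [hSval w hw0]
      exact div_ne_zero (hfne w hw hw0) hw0
  have hp0 : p 0 = 1 := by rw [hpdef]; simp [hS0, hf'0]
  have hp_eq : ∀ w : ℂ, ‖w‖ < 1 → w ≠ 0 → p w = w * deriv f w / f w := by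
    intro w hw hw0
    rw [hpdef]
    simp only
    rw [hSval w hw0, div_div_eq_mul_div, mul_comm (deriv f w) w]
  have hpre : ∀ w ∈ ball (0:ℂ) 1, α < (p w).re := by
    intro w hw
    rcases eq_or_ne w 0 with rfl | hw0
    · rw [hp0]; simpa using hα1'
    · rw [hp_eq w (mem_ball_zero_iff.1 hw) hw0]
      exact hstar w (mem_ball_zero_iff.1 hw) hw0
  have hpdiff : DifferentiableOn ℂ p (ball (0:ℂ) 1) := by
    apply DifferentiableOn.div
    · exact hf.deriv.differentiableOn
    · exact (Complex.differentiableOn_dslope (ball_mem_nhds _ one_pos)).mpr hf.differentiableOn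
    · exact fun w hw => hSne w (mem_ball_zero_iff.1 hw)
  -- the key pointwise bound for nonzero points
  have key : ∀ w : ℂ, ‖w‖ < 1 → w ≠ 0 →
      (1 - ‖w‖ ^ 2) * ‖deriv (deriv f) w / deriv f w‖ ≤ 6 - 4 * α := by
    intro z hz hz0
    have hzball : z ∈ ball (0:ℂ) 1 := mem_ball_zero_iff.2 hz
    obtain ⟨hA, hB⟩ := starlike_core α hα0 hα1' hpdiff hp0 hpre hz
    -- compute deriv p z
    have hq : p =ᶠ[nhds z] fun w => w * deriv f w / f w := by
      have hU : IsOpen (ball (0:ℂ) 1 \ {0}) := isOpen_ball.sdiff isClosed_singleton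
      refine Filter.eventuallyEq_of_mem (hU.mem_nhds ⟨hzball, hz0⟩) ?_
      intro w hw
      exact hp_eq w (mem_ball_zero_iff.1 hw.1) hw.2
    have hf''at : HasDerivAt (deriv f) (deriv (deriv f) z) z :=
      ((hf.deriv z hzball).differentiableAt).hasDerivAt
    have hfat : HasDerivAt f (deriv f z) z := ((hf z hzball).differentiableAt).hasDerivAt
    have hnum : HasDerivAt (fun w => w * deriv f w)
        (1 * deriv f z + z * deriv (deriv f) z) z := (hasDerivAt_id z).mul hf''at
    have hqder : HasDerivAt (fun w => w * deriv f w / f w)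
        (((1 * deriv f z + z * deriv (deriv f) z) * f z - z * deriv f z * deriv f z) /
          (f z)^2) z := hnum.div hfat (hfne z hz hz0)
    have hderiv_p : deriv p z =
        ((1 * deriv f z + z * deriv (deriv f) z) * f z - z * deriv f z * deriv f z) /
          (f z)^2 := by rw [hq.deriv_eq, hqder.deriv]
    -- the pre-Schwarzian identity
    have hF1 : f z ≠ 0 := hfne z hz hz0
    have hF2 : deriv f z ≠ 0 := hf'ne z hz
    have hid : deriv (deriv f) z / deriv f z = deriv p z / p z + (p z - 1) / z := by
      rw [hderiv_p, hp_eq z hz hz0]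
      field_simp
      ring
    -- numeric bounds
    have hrePz := hpre z hzball
    have hre_le : (p z).re ≤ ‖p z‖ := by
      exact Complex.re_le_norm _
    have hNppos : 0 < ‖p z‖ := by linarith
    have hr0 : 0 < ‖z‖ := norm_pos_iff.mpr hz0
    have hr1 : 0 < 1 - ‖z‖ := by linarith
    have hrsq : 0 ≤ 1 - ‖z‖^2 := by nlinarith
    have hN3 : ‖deriv (deriv f) z / deriv f z‖ ≤
        ‖deriv p z‖ / ‖p z‖ + ‖p z - 1‖ / ‖z‖ := by
      rw [hid, ← norm_div, ← norm_div]
      exact norm_add_le _ _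
    have step1 := mul_le_mul_of_nonneg_left hN3 hrsq
    rw [mul_add] at step1
    have step2 : (1 - ‖z‖^2) * (‖deriv p z‖ / ‖p z‖) ≤ 2 := by
      rw [← mul_div_assoc, div_le_iff₀ hNppos]
      linarith
    have hA' : ‖p z - 1‖ * (1 - ‖z‖) ≤ 2 * (1 - α) * ‖z‖ := by
      rw [le_div_iff₀ hr1] at hA
      linarith
    have step3 : (1 - ‖z‖^2) * (‖p z - 1‖ / ‖z‖) ≤ 4 * (1 - α) := by
      rw [← mul_div_assoc, div_le_iff₀ hr0]
      nlinarith [mul_le_mul_of_nonneg_left hA' (by linarith [norm_nonneg z] : (0:ℝ) ≤ 1 + ‖z‖),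
        mul_nonneg (mul_nonneg (by linarith : (0:ℝ) ≤ 1 - α) hr0.le) hr1.le]
    linarith
  -- conclude, including z = 0 by continuity
  intro z hz
  rcases eq_or_ne z 0 with rfl | hz0
  · -- continuity argument
    have h0ball : (0:ℂ) ∈ ball (0:ℂ) 1 := mem_ball_self one_pos
    set G : ℂ → ℝ := fun w => (1 - ‖w‖^2) * ‖deriv (deriv f) w / deriv f w‖ with hGdef
    have hc2 : ContinuousAt (fun w => deriv (deriv f) w / deriv f w) 0 := by
      apply ContinuousAt.div
      · exact (hf.deriv.deriv 0 h0ball).continuousAt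
      · exact (hf.deriv 0 h0ball).continuousAt
      · rw [hf'0]; exact one_ne_zero
    have hc1 : ContinuousAt (fun w : ℂ => 1 - ‖w‖^2) 0 := by fun_prop
    have hGcont : ContinuousAt G 0 := hc1.mul hc2.norm
    have htend : Filter.Tendsto G (nhdsWithin 0 {(0:ℂ)}ᶜ) (nhds (G 0)) :=
      hGcont.tendsto.mono_left nhdsWithin_le_nhds
    have hev : ∀ᶠ w in nhdsWithin 0 {(0:ℂ)}ᶜ, G w ≤ 6 - 4 * α := by
      filter_upwards [self_mem_nhdsWithin,
        mem_nhdsWithin_of_mem_nhds (ball_mem_nhds (0:ℂ) one_pos)] with w hw1 hw2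
      exact key w (mem_ball_zero_iff.1 hw2) hw1
    exact le_of_tendsto htend hev
  · exact key z hz hz0
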